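/- arXiv:1004.1740 — 2 statements merged into one kernel-verified Lean document; each statement's English description precedes it below -/
import Mathlib

section
/- For every positive integer n, M(n) ≥ 2^(n−1). -/
/-- A finite sequence (list) of naturals contains a 3-term arithmetic progression
as a subsequence: there are indices `i < j < k` with `a i + a k = 2 * a j`,
equivalently some sublist `[x, y, z]` with `x + z = 2 * y`. -/
def Has3AP (l : List ℕ) : Prop :=
  ∃ x y z : ℕ, [x, y, z].Sublist l ∧ x + z = 2 * y

/-- `M n` is the number of 3AP-free permutations of `{1, 2, ..., n}`. -/
noncomputable def M (n : ℕ) : ℕ :=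
  Nat.card {l : List ℕ // l.Perm (List.range' 1 n) ∧ ¬ Has3AP l}


/-!
Split `{1, …, n}` into its `⌊n/2⌋` even and `⌈n/2⌉` odd elements. The maps `x ↦ 2x` and
`x ↦ 2x - 1` preserve and reflect 3-term progressions, and an even and an odd number never
sum to an even one, so the outer terms of a progression have the same parity. Hence a
3AP-free arrangement of the evens followed by one of the odds (or the other way round) is
3AP-free, which gives `M n ≥ 2 M ⌊n/2⌋ M ⌈n/2⌉` and the bound `2 ^ (n - 1)` by induction.
-/

theorem not_has3AP_of_length_lt_three {l : List ℕ} (hl : l.length < 3) : ¬ Has3AP l := by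
  rintro ⟨x, y, z, hs, -⟩
  have := hs.length_le
  simp only [List.length_cons, List.length_nil] at this
  omega

theorem Has3AP.of_map {f : ℕ → ℕ} {l : List ℕ}
    (hf : ∀ x ∈ l, ∀ y ∈ l, ∀ z ∈ l, f x + f z = 2 * f y → x + z = 2 * y)
    (h : Has3AP (l.map f)) : Has3AP l := by
  obtain ⟨_, _, _, hs, he⟩ := h
  obtain ⟨l', hl', heq⟩ := List.sublist_map_iff.1 hs
  rcases l' with _ | ⟨a, _ | ⟨b, _ | ⟨c, _ | ⟨d, l'⟩⟩⟩⟩ <;>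
    simp only [List.map_cons, List.map_nil, List.cons.injEq, reduceCtorEq, and_false] at heq
  obtain ⟨rfl, rfl, rfl, -⟩ := heq
  have hmem : ∀ w ∈ [a, b, c], w ∈ l := fun w hw => hl'.subset hw
  exact ⟨a, b, c, hl', hf a (hmem a (by simp)) b (hmem b (by simp)) c (hmem c (by simp)) he⟩

theorem Has3AP.of_map_two_mul {l : List ℕ} (h : Has3AP (l.map (2 * ·))) : Has3AP l :=
  h.of_map fun _ _ _ _ _ _ h => by omega

theorem Has3AP.of_map_two_mul_sub_one {l : List ℕ} (hl : ∀ x ∈ l, 1 ≤ x)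
    (h : Has3AP (l.map (2 * · - 1))) : Has3AP l :=
  h.of_map fun x hx y hy z hz h => by
    have := hl x hx
    have := hl y hy
    have := hl z hz
    omega

theorem not_has3AP_append {E O : List ℕ} (hpar : ∀ x ∈ E, ∀ z ∈ O, x % 2 ≠ z % 2)
    (hE : ¬ Has3AP E) (hO : ¬ Has3AP O) : ¬ Has3AP (E ++ O) := by
  rintro ⟨x, y, z, hs, he⟩
  obtain ⟨l₁, l₂, heq, h₁, h₂⟩ := List.sublist_append_iff.1 hs
  have mixed : x ∈ l₁ → z ∈ l₂ → False := fun hx hz =>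
    hpar x (h₁.subset hx) z (h₂.subset hz) (by omega)
  rcases l₁ with _ | ⟨p, _ | ⟨q, _ | ⟨r, l₁⟩⟩⟩ <;>
    simp only [List.nil_append, List.cons_append, List.cons.injEq] at heq
  · exact hO ⟨x, y, z, heq ▸ h₂, he⟩
  · obtain ⟨rfl, rfl⟩ := heq
    exact mixed (by simp) (by simp)
  · obtain ⟨rfl, rfl, rfl⟩ := heq
    exact mixed (by simp) (by simp)
  · obtain ⟨rfl, rfl, rfl, hnil⟩ := heq
    obtain ⟨rfl, rfl⟩ := List.append_eq_nil_iff.1 hnil.symm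
    exact hE ⟨x, y, z, h₁, he⟩

theorem perm_range'_evens_append_odds (n : ℕ) :
    ((List.range' 1 (n / 2)).map (2 * ·) ++
      (List.range' 1 ((n + 1) / 2)).map (2 * · - 1)).Perm (List.range' 1 n) := by
  apply List.perm_of_nodup_nodup_toFinset_eq _ List.nodup_range'
  · ext k
    simp only [List.mem_toFinset, List.mem_append, List.mem_map, List.mem_range'_1]
    constructor
    · rintro (⟨x, hx, rfl⟩ | ⟨x, hx, rfl⟩) <;> omega
    · rintro ⟨h₁, h₂⟩
      rcases Nat.even_or_odd k with ⟨x, hx⟩ | ⟨x, hx⟩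
      · exact Or.inl ⟨x, by omega, by omega⟩
      · exact Or.inr ⟨x + 1, by omega, by omega⟩
  · refine List.Nodup.append ((List.nodup_range').map fun x y h => by omega)
      ((List.nodup_range').map fun x y h => by omega) ?_
    simp only [List.Disjoint, List.mem_map, List.mem_range'_1]
    rintro _ ⟨x, hx, rfl⟩ ⟨y, hy, h⟩
    omega

abbrev FreePerm (n : ℕ) := {l : List ℕ // l.Perm (List.range' 1 n) ∧ ¬ Has3AP l}

namespace FreePerm

instance (n : ℕ) : Finite (FreePerm n) :=
  Set.Finite.to_subtype <| (List.finite_toSet (List.range' 1 n).permutations).subset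
    fun _ hl => List.mem_permutations.2 hl.1

variable {n k : ℕ}

theorem one_le (l : FreePerm n) : ∀ x ∈ l.1, 1 ≤ x :=
  fun _ hx => (List.mem_range'_1.1 (l.2.1.subset hx)).1

theorem length_eq (l : FreePerm n) : l.1.length = n := by
  simpa using l.2.1.length_eq

theorem ne_nil (l : FreePerm n) (hn : 0 < n) : l.1 ≠ [] :=
  List.ne_nil_of_length_pos (by rw [l.length_eq]; exact hn)

theorem map_two_mul_append_ne (l : FreePerm n) (m : FreePerm k) (hn : 0 < n) (hk : 0 < k)
    (E O : List ℕ) : l.1.map (2 * ·) ++ E ≠ m.1.map (2 * · - 1) ++ O := by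
  obtain ⟨x, xs, hx⟩ := List.exists_cons_of_ne_nil (l.ne_nil hn)
  obtain ⟨y, ys, hy⟩ := List.exists_cons_of_ne_nil (m.ne_nil hk)
  have := m.one_le y (hy ▸ List.mem_cons_self)
  rw [hx, hy]
  simp only [List.map_cons, List.cons_append, ne_eq, List.cons.injEq, not_and]
  omega

theorem mod_two_ne_of_mem_map (l : FreePerm n) (m : FreePerm k) :
    ∀ x ∈ l.1.map (2 * ·), ∀ z ∈ m.1.map (2 * · - 1), x % 2 ≠ z % 2 := by
  simp only [List.mem_map]
  rintro _ ⟨x, -, rfl⟩ _ ⟨z, hz, rfl⟩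
  have := m.one_le z hz
  omega

theorem map_two_mul_injective {l l' : FreePerm n} (h : l.1.map (2 * ·) = l'.1.map (2 * ·)) :
    l = l' :=
  Subtype.ext (List.map_injective_iff.2 (mul_right_injective₀ two_ne_zero) h)

theorem map_two_mul_sub_one_injective {l l' : FreePerm n}
    (h : l.1.map (2 * · - 1) = l'.1.map (2 * · - 1)) : l = l' := by
  have halve : ∀ l : FreePerm n, (l.1.map (2 * · - 1)).map (fun y => (y + 1) / 2) = l.1 :=
    fun l => by
      rw [List.map_map]
      conv_rhs => rw [← List.map_id l.1]
      refine List.map_congr_left fun x hx => ?_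
      have := l.one_le x hx
      simp only [Function.comp_apply, id_eq]
      omega
  exact Subtype.ext (by rw [← halve l, h, halve l'])

def glue (n : ℕ) : Bool × FreePerm (n / 2) × FreePerm ((n + 1) / 2) → FreePerm n
  | (c, l, m) =>
    have hperm := (l.2.1.map (2 * ·)).append (m.2.1.map (2 * · - 1)) |>.trans
      (perm_range'_evens_append_odds n)
    have hpar := mod_two_ne_of_mem_map l m
    have heven : ¬ Has3AP (l.1.map (2 * ·)) := fun h => l.2.2 h.of_map_two_mul
    have hodd : ¬ Has3AP (m.1.map (2 * · - 1)) := fun h =>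
      m.2.2 (h.of_map_two_mul_sub_one m.one_le)
    bif c then
      ⟨m.1.map (2 * · - 1) ++ l.1.map (2 * ·), List.perm_append_comm.trans hperm,
        not_has3AP_append (fun x hx z hz => (hpar z hz x hx).symm) hodd heven⟩
    else
      ⟨l.1.map (2 * ·) ++ m.1.map (2 * · - 1), hperm, not_has3AP_append hpar heven hodd⟩

theorem glue_injective (hn : 2 ≤ n) : Function.Injective (glue n) := by
  have ha : 0 < n / 2 := by omega
  have hb : 0 < (n + 1) / 2 := by omega
  rintro ⟨c, l, m⟩ ⟨c', l', m'⟩ h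
  rw [Subtype.ext_iff] at h
  cases c <;> cases c' <;> simp only [glue, cond_true, cond_false] at h
  · obtain ⟨hl, hm⟩ := List.append_inj h (by simp [length_eq])
    rw [map_two_mul_injective hl, map_two_mul_sub_one_injective hm]
  · exact absurd h (map_two_mul_append_ne l m' ha hb _ _)
  · exact absurd h.symm (map_two_mul_append_ne l' m ha hb _ _)
  · obtain ⟨hm, hl⟩ := List.append_inj h (by simp [length_eq])
    rw [map_two_mul_injective hl, map_two_mul_sub_one_injective hm]

end FreePerm

theorem two_mul_M_mul_M_le {n : ℕ} (hn : 2 ≤ n) : 2 * (M (n / 2) * M ((n + 1) / 2)) ≤ M n := by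
  have := Nat.card_le_card_of_injective _ (FreePerm.glue_injective hn)
  rwa [Nat.card_prod, Nat.card_prod, Nat.card_eq_fintype_card (α := Bool), Fintype.card_bool]
    at this

theorem one_le_M_one : 1 ≤ M 1 :=
  have : Nonempty (FreePerm 1) :=
    ⟨⟨[1], by simp, not_has3AP_of_length_lt_three (by simp)⟩⟩
  Nat.card_pos (α := FreePerm 1)

/-- For every positive integer `n`, `M n ≥ 2 ^ (n - 1)`. -/
theorem M_ge_two_pow (n : ℕ) (hn : 0 < n) : 2 ^ (n - 1) ≤ M n := by
  induction n using Nat.strong_induction_on with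
  | _ n ih =>
  obtain rfl | hn₂ : n = 1 ∨ 2 ≤ n := by omega
  · exact one_le_M_one
  calc 2 ^ (n - 1) = 2 * (2 ^ (n / 2 - 1) * 2 ^ ((n + 1) / 2 - 1)) := by
        rw [← pow_add, ← pow_succ']
        congr 1
        omega
    _ ≤ 2 * (M (n / 2) * M ((n + 1) / 2)) := by
        gcongr <;> exact ih _ (by omega) (by omega)
    _ ≤ M n := two_mul_M_mul_M_le hn₂
end

section
/- There exists a 4-free set S of positive integers whose lower density is at least 1/3 (for example S = ⋃_{i ≥ 0} {4^i, 4^i+1, ..., 2·4^i}). Hence β(4) = sup{lower density of S : S is 4-free} ≥ 1/3. -/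
open Filter

/-- `f : ℕ → ℕ` is a (bijective) enumeration of the set `S`. -/
def IsPermOf (f : ℕ → ℕ) (S : Set ℕ) : Prop :=
  Function.Injective f ∧ Set.range f = S

/-- A set `S` of naturals is 4-free if some enumeration of `S` contains no
4-term arithmetic progression (with nonzero, possibly negative, common
difference) as a subsequence. -/
def FourFree (S : Set ℕ) : Prop :=
  ∃ f : ℕ → ℕ, IsPermOf f S ∧
    ¬ ∃ i₁ i₂ i₃ i₄ : ℕ, i₁ < i₂ ∧ i₂ < i₃ ∧ i₃ < i₄ ∧
      ((f i₂ : ℤ) - (f i₁ : ℤ) = (f i₃ : ℤ) - (f i₂ : ℤ)) ∧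
      ((f i₃ : ℤ) - (f i₂ : ℤ) = (f i₄ : ℤ) - (f i₃ : ℤ)) ∧
      f i₁ ≠ f i₂

/-- The lower density `liminf |S ∩ [1, n]| / n` of a set of naturals. -/
noncomputable def lowerDensity (S : Set ℕ) : ℝ :=
  liminf (fun n : ℕ => (Nat.card ↥(S ∩ Set.Icc 1 n) : ℝ) / n) atTop

/-!
Each block `[4^i, 2·4^i]` is listed in an order with no 3-term progression as a subsequence
(evens before odds, recursively), and the blocks are listed one after another. Since the blocks
grow fourfold, a progression stepping into a new block makes a jump larger than any of its
earlier differences, so the last three terms of a 4-term progression share a block, which is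
impossible. For the density, `[4^i, 4^(i+1))` maps three-to-one into `[4^i, 2·4^i]` without
increasing any element, so at least a third of `[1, n]` lies in the set.
-/

theorem List.three_sublist_append {α : Type*} {x y z : α} {l r : List α}
    (h : [x, y, z].Sublist (l ++ r)) :
    [x, y, z].Sublist l ∨ [x, y, z].Sublist r ∨ (x ∈ l ∧ z ∈ r) := by
  obtain ⟨l₁, l₂, heq, h₁, h₂⟩ := List.sublist_append_iff.mp h
  rcases l₁ with _ | ⟨a, _ | ⟨b, _ | ⟨c, _ | ⟨d, l₁⟩⟩⟩⟩ <;>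
    simp only [List.nil_append, List.cons_append, List.cons.injEq, reduceCtorEq, and_false] at heq
  · exact .inr (.inl (heq ▸ h₂))
  · obtain ⟨rfl, rfl⟩ := heq
    exact .inr (.inr ⟨h₁.subset (by simp), h₂.subset (by simp)⟩)
  · obtain ⟨rfl, rfl, rfl⟩ := heq
    exact .inr (.inr ⟨h₁.subset (by simp), h₂.subset (by simp)⟩)
  · obtain ⟨rfl, rfl, rfl, -⟩ := heq
    exact .inl h₁

theorem List.four_sublist_append {α : Type*} {a b c d : α} {l r : List α}
    (h : [a, b, c, d].Sublist (l ++ r)) :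
    [a, b, c, d].Sublist l ∨ (b ∈ l ∧ c ∈ l ∧ d ∈ r) ∨ (a ∈ l ∧ b ∈ l ∧ c ∈ r) ∨
      [b, c, d].Sublist r := by
  obtain ⟨l₁, l₂, heq, h₁, h₂⟩ := List.sublist_append_iff.mp h
  rcases l₁ with _ | ⟨e, _ | ⟨f, _ | ⟨g, _ | ⟨k, _ | ⟨m, l₁⟩⟩⟩⟩⟩ <;>
    simp only [List.nil_append, List.cons_append, List.cons.injEq, reduceCtorEq, and_false] at heq
  · subst heq; exact .inr (.inr (.inr ((List.sublist_cons_self a _).trans h₂)))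
  · obtain ⟨rfl, rfl⟩ := heq; exact .inr (.inr (.inr h₂))
  · obtain ⟨rfl, rfl, rfl⟩ := heq
    exact .inr (.inr (.inl ⟨h₁.subset (by simp), h₁.subset (by simp), h₂.subset (by simp)⟩))
  · obtain ⟨rfl, rfl, rfl, rfl⟩ := heq
    exact .inr (.inl ⟨h₁.subset (by simp), h₁.subset (by simp), h₂.subset (by simp)⟩)
  · obtain ⟨rfl, rfl, rfl, rfl, -⟩ := heq
    exact .inl h₁

def NoThreeAP (l : List ℕ) : Prop :=
  ∀ x y z, [x, y, z].Sublist l → x + z = 2 * y → x = z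

namespace NoThreeAP

theorem map_mul_add {l : List ℕ} (h : NoThreeAP l) {a : ℕ} (ha : a ≠ 0) (b : ℕ) :
    NoThreeAP (l.map (a * · + b)) := by
  intro x y z hs hxyz
  obtain ⟨l', hl', hmap⟩ := List.sublist_map_iff.mp hs
  match l', hmap with
  | [u, v, w], hmap =>
    simp only [List.map_cons, List.map_nil, List.cons.injEq] at hmap
    obtain ⟨rfl, rfl, rfl, -⟩ := hmap
    have huw : u + w = 2 * v := by
      apply Nat.eq_of_mul_eq_mul_left (Nat.pos_of_ne_zero ha); linarith
    rw [h u v w hl' huw]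

theorem append {l r : List ℕ} (hl : NoThreeAP l) (hr : NoThreeAP r)
    (hodd : ∀ x ∈ l, ∀ z ∈ r, Odd (x + z)) : NoThreeAP (l ++ r) := by
  intro x y z hs hxyz
  rcases List.three_sublist_append hs with hs | hs | ⟨hx, hz⟩
  · exact hl x y z hs hxyz
  · exact hr x y z hs hxyz
  · exact absurd (hodd x hx z hz) (by rw [hxyz, Nat.not_odd_iff_even]; exact even_two_mul y)

end NoThreeAP

def apFreeRange : ℕ → List ℕ
  | 0 => []
  | 1 => [0]
  | n + 2 => (apFreeRange ((n + 3) / 2)).map (2 * ·) ++ (apFreeRange ((n + 2) / 2)).map (2 * · + 1)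

theorem mem_apFreeRange {x n : ℕ} : x ∈ apFreeRange n ↔ x < n := by
  induction n using apFreeRange.induct generalizing x with
  | case1 => simp [apFreeRange]
  | case2 => simp [apFreeRange]
  | case3 n ih₁ ih₂ =>
    simp only [apFreeRange, List.mem_append, List.mem_map, ih₁, ih₂]
    constructor
    · rintro (⟨y, hy, rfl⟩ | ⟨y, hy, rfl⟩) <;> omega
    · intro hx
      rcases Nat.even_or_odd' x with ⟨y, rfl | rfl⟩
      · exact .inl ⟨y, by omega, rfl⟩
      · exact .inr ⟨y, by omega, rfl⟩

theorem nodup_apFreeRange (n : ℕ) : (apFreeRange n).Nodup := by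
  induction n using apFreeRange.induct with
  | case1 => simp [apFreeRange]
  | case2 => simp [apFreeRange]
  | case3 n ih₁ ih₂ =>
    rw [apFreeRange, List.nodup_append]
    refine ⟨ih₁.map fun a b h => by omega, ih₂.map fun a b h => by omega, ?_⟩
    simp only [List.mem_map]
    rintro _ ⟨a, -, rfl⟩ _ ⟨b, -, rfl⟩
    omega

theorem noThreeAP_apFreeRange (n : ℕ) : NoThreeAP (apFreeRange n) := by
  induction n using apFreeRange.induct with
  | case1 => intro x y z hs; simp [apFreeRange] at hs
  | case2 => intro x y z hs; exact absurd hs.length_le (by simp [apFreeRange])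
  | case3 n ih₁ ih₂ =>
    rw [apFreeRange]
    refine (ih₁.map_mul_add two_ne_zero 0).append (ih₂.map_mul_add two_ne_zero 1) ?_
    simp only [List.mem_map]
    rintro _ ⟨a, -, rfl⟩ _ ⟨b, -, rfl⟩
    exact ⟨a + b, by ring⟩

section FlatSeq

variable {α : Type*} (L : ℕ → List α)

def flatPrefix (N : ℕ) : List α := (List.range N).flatMap L

theorem flatPrefix_succ (N : ℕ) : flatPrefix L (N + 1) = flatPrefix L N ++ L N := by
  simp [flatPrefix, List.range_succ]

theorem flatPrefix_isPrefix {N M : ℕ} (h : N ≤ M) : flatPrefix L N <+: flatPrefix L M := by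
  induction h with
  | refl => exact List.prefix_refl _
  | step _ ih => exact ih.trans (flatPrefix_succ L _ ▸ List.prefix_append _ _)

theorem mem_flatPrefix {x : α} {N : ℕ} : x ∈ flatPrefix L N ↔ ∃ i < N, x ∈ L i := by
  simp [flatPrefix]

variable {L}

theorem le_length_flatPrefix (hL : ∀ i, L i ≠ []) (N : ℕ) : N ≤ (flatPrefix L N).length := by
  induction N with
  | zero => simp
  | succ N ih =>
    rw [flatPrefix_succ, List.length_append]
    have := List.length_pos_iff.mpr (hL N)
    omega

/-- The infinite concatenation `L 0 ++ L 1 ++ ⋯` read as a sequence. When every `L i` is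
nonempty, index `n` already lies in `flatPrefix L (n + 1)`, so `default` is never returned. -/
def flatSeq [Inhabited α] (L : ℕ → List α) (n : ℕ) : α := (flatPrefix L (n + 1)).getD n default

variable [Inhabited α]

theorem flatSeq_eq_getElem (hL : ∀ i, L i ≠ []) {n N : ℕ} (hn : n < (flatPrefix L N).length) :
    flatSeq L n = (flatPrefix L N)[n] := by
  have hn' : n < (flatPrefix L (n + 1)).length := le_length_flatPrefix hL (n + 1)
  rw [flatSeq, List.getD_eq_getElem _ _ hn']
  rcases le_total (n + 1) N with h | h
  · exact (flatPrefix_isPrefix L h).getElem hn'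
  · exact ((flatPrefix_isPrefix L h).getElem hn).symm

theorem flatSeq_injective (hL : ∀ i, L i ≠ []) (hnd : ∀ N, (flatPrefix L N).Nodup) :
    Function.Injective (flatSeq L) := by
  intro n n' h
  have hN := le_length_flatPrefix hL (max n n' + 1)
  rw [flatSeq_eq_getElem hL (N := max n n' + 1) (by omega),
    flatSeq_eq_getElem hL (N := max n n' + 1) (by omega)] at h
  exact ((hnd _).getElem_inj_iff).mp h

theorem range_flatSeq (hL : ∀ i, L i ≠ []) : Set.range (flatSeq L) = {x | ∃ i, x ∈ L i} := by
  ext x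
  constructor
  · rintro ⟨n, rfl⟩
    have hn : n < (flatPrefix L (n + 1)).length := le_length_flatPrefix hL (n + 1)
    obtain ⟨i, -, hi⟩ := (mem_flatPrefix L).mp (flatSeq_eq_getElem hL hn ▸ List.getElem_mem hn)
    exact ⟨i, hi⟩
  · rintro ⟨i, hi⟩
    obtain ⟨n, hn, rfl⟩ := List.mem_iff_getElem.mp ((mem_flatPrefix L).mpr ⟨i, i.lt_succ_self, hi⟩)
    exact ⟨n, flatSeq_eq_getElem hL hn⟩

theorem sublist_flatPrefix (hL : ∀ i, L i ≠ []) {i₁ i₂ i₃ i₄ : ℕ}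
    (h₁₂ : i₁ < i₂) (h₂₃ : i₂ < i₃) (h₃₄ : i₃ < i₄) :
    [flatSeq L i₁, flatSeq L i₂, flatSeq L i₃, flatSeq L i₄].Sublist (flatPrefix L (i₄ + 1)) := by
  have h₄ : i₄ < (flatPrefix L (i₄ + 1)).length := le_length_flatPrefix hL (i₄ + 1)
  have := List.map_getElem_sublist (l := flatPrefix L (i₄ + 1))
    (is := [⟨i₁, by omega⟩, ⟨i₂, by omega⟩, ⟨i₃, by omega⟩, ⟨i₄, h₄⟩]) (by
      simp only [List.pairwise_cons, List.mem_cons, List.not_mem_nil, or_false, forall_eq_or_imp,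
        Fin.mk_lt_mk, forall_eq, IsEmpty.forall_iff, implies_true, List.Pairwise.nil, and_true]
      omega)
  simpa [← flatSeq_eq_getElem hL] using this

end FlatSeq

def NoFourAP (l : List ℕ) : Prop :=
  ∀ a b c d, [a, b, c, d].Sublist l → (b : ℤ) - a = c - b → (c : ℤ) - b = d - c → a = b

/-- If `x ≥ 1` and `2 y ≤ m ≤ z` then `y - x < y ≤ z - y`: a progression cannot step from `l`
into `r` at its second or third step, so a 4-term one has its last three terms in `r`. -/
theorem NoFourAP.append {l r : List ℕ} {m : ℕ} (hl : NoFourAP l) (hr : NoThreeAP r)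
    (hlm : ∀ y ∈ l, 0 < y ∧ 2 * y ≤ m) (hrm : ∀ z ∈ r, m ≤ z) : NoFourAP (l ++ r) := by
  intro a b c d hs hab hbc
  rcases List.four_sublist_append hs with hs | ⟨hb, hc, hd⟩ | ⟨ha, hb, hc⟩ | hs
  · exact hl a b c d hs hab hbc
  · have := hlm b hb; have := hlm c hc; have := hrm d hd; omega
  · have := hlm a ha; have := hlm b hb; have := hrm c hc; omega
  · have := hr b c d hs (by omega); omega

theorem four_mul_pow_le_pow {i j : ℕ} (h : i < j) : 4 * 4 ^ i ≤ 4 ^ j := by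
  simpa [pow_succ'] using Nat.pow_le_pow_right (show 0 < 4 by norm_num) h

def powFourBlock (i : ℕ) : List ℕ := (apFreeRange (4 ^ i + 1)).map (· + 4 ^ i)

theorem mem_powFourBlock {x i : ℕ} : x ∈ powFourBlock i ↔ 4 ^ i ≤ x ∧ x ≤ 2 * 4 ^ i := by
  simp only [powFourBlock, List.mem_map, mem_apFreeRange]
  constructor
  · rintro ⟨y, hy, rfl⟩; omega
  · rintro ⟨h₁, h₂⟩; exact ⟨x - 4 ^ i, by omega, by omega⟩

theorem powFourBlock_ne_nil (i : ℕ) : powFourBlock i ≠ [] :=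
  List.ne_nil_of_mem (mem_powFourBlock.mpr ⟨le_rfl, by omega⟩)

theorem noFourAP_flatPrefix_powFourBlock (N : ℕ) : NoFourAP (flatPrefix powFourBlock N) := by
  induction N with
  | zero => intro a b c d hs; simp [flatPrefix] at hs
  | succ N ih =>
    rw [flatPrefix_succ]
    refine ih.append (m := 4 ^ N) ?_ ?_ ?_
    · simpa [powFourBlock] using (noThreeAP_apFreeRange _).map_mul_add one_ne_zero (4 ^ N)
    · intro y hy
      obtain ⟨i, hi, hy⟩ := (mem_flatPrefix _).mp hy
      have := four_mul_pow_le_pow hi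
      have := mem_powFourBlock.mp hy
      have : 0 < 4 ^ i := by positivity
      omega
    · intro z hz; exact (mem_powFourBlock.mp hz).1

theorem nodup_flatPrefix_powFourBlock (N : ℕ) : (flatPrefix powFourBlock N).Nodup := by
  refine List.nodup_flatMap.mpr ⟨fun i _ => (nodup_apFreeRange _).map (add_left_injective _), ?_⟩
  refine List.pairwise_lt_range.imp fun {i j} hij => List.disjoint_left.mpr fun x hi hj => ?_
  have := four_mul_pow_le_pow hij
  have := mem_powFourBlock.mp hi
  have := mem_powFourBlock.mp hj
  have : 0 < 4 ^ i := by positivity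
  omega

theorem fourFree_powFourBlocks : FourFree (⋃ i : ℕ, Set.Icc (4 ^ i) (2 * 4 ^ i)) := by
  refine ⟨flatSeq powFourBlock, ⟨flatSeq_injective powFourBlock_ne_nil
    nodup_flatPrefix_powFourBlock, ?_⟩, ?_⟩
  · ext x
    simp [range_flatSeq powFourBlock_ne_nil, mem_powFourBlock]
  · rintro ⟨i₁, i₂, i₃, i₄, h₁₂, h₂₃, h₃₄, hd₁, hd₂, hne⟩
    exact hne (noFourAP_flatPrefix_powFourBlock _ _ _ _ _
      (sublist_flatPrefix powFourBlock_ne_nil h₁₂ h₂₃ h₃₄) hd₁ hd₂)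

theorem card_inter_Icc_le (S : Set ℕ) (n : ℕ) : Nat.card ↥(S ∩ Set.Icc 1 n) ≤ n := by
  simpa using Nat.card_mono (Set.finite_Icc 1 n) (Set.inter_subset_right (s := S))

theorem card_inter_Icc_div_le_one (S : Set ℕ) (n : ℕ) :
    (Nat.card ↥(S ∩ Set.Icc 1 n) : ℝ) / n ≤ 1 := by
  rcases Nat.eq_zero_or_pos n with rfl | hn
  · simp
  · rw [div_le_one (by exact_mod_cast hn)]
    exact_mod_cast card_inter_Icc_le S n

theorem lowerDensity_le_one (S : Set ℕ) : lowerDensity S ≤ 1 :=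
  liminf_le_of_frequently_le (Eventually.of_forall (card_inter_Icc_div_le_one S)).frequently
    (isBoundedUnder_of ⟨0, fun n => by positivity⟩)

theorem le_lowerDensity {S : Set ℕ} {c : ℝ} (h : ∀ n : ℕ, c * n ≤ Nat.card ↥(S ∩ Set.Icc 1 n)) :
    c ≤ lowerDensity S := by
  refine le_liminf_of_le
    (isBoundedUnder_of ⟨1, card_inter_Icc_div_le_one S⟩).isCoboundedUnder_ge ?_
  filter_upwards [eventually_gt_atTop 0] with n hn
  rw [le_div_iff₀ (by exact_mod_cast hn)]
  exact h n

/-- `x ∈ [4^i, 4^(i+1))` is sent to `(4^i + (x - 4^i) / 3, (x - 4^i) % 3)`, whose first entry lies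
in `[4^i, 2·4^i)`: an injection of `[1, n]` into `(S ∩ [1, n]) × {0, 1, 2}`. -/
theorem le_three_mul_card_powFourBlocks (n : ℕ) :
    n ≤ 3 * Nat.card ↥((⋃ i : ℕ, Set.Icc (4 ^ i) (2 * 4 ^ i)) ∩ Set.Icc 1 n) := by
  set S := ⋃ i : ℕ, Set.Icc (4 ^ i) (2 * 4 ^ i)
  have hlog {x : ℕ} (hx : x ≠ 0) : 4 ^ Nat.log 4 x ≤ x ∧ x < 4 * 4 ^ Nat.log 4 x :=
    ⟨Nat.pow_log_le_self 4 hx, by simpa [pow_succ'] using Nat.lt_pow_succ_log_self (by norm_num) x⟩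
  let g (x : ℕ) : ℕ × ℕ :=
    (4 ^ Nat.log 4 x + (x - 4 ^ Nat.log 4 x) / 3, (x - 4 ^ Nat.log 4 x) % 3)
  have hmaps : ∀ x ∈ Set.Icc 1 n, g x ∈ (S ∩ Set.Icc 1 n) ×ˢ Set.Iio 3 := by
    rintro x ⟨hx₁, hxn⟩
    have := hlog (by omega : x ≠ 0)
    refine ⟨⟨Set.mem_iUnion.mpr ⟨Nat.log 4 x, ?_, ?_⟩, ?_, ?_⟩, Nat.mod_lt _ (by norm_num)⟩ <;>
      dsimp only [g] <;> omega
  have hinj : Set.InjOn g (Set.Icc 1 n) := by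
    rintro x ⟨hx₁, -⟩ y ⟨hy₁, -⟩ hxy
    simp only [g, Prod.mk.injEq] at hxy
    have hx := hlog (by omega : x ≠ 0)
    have hy := hlog (by omega : y ≠ 0)
    have hij : Nat.log 4 x = Nat.log 4 y := by
      by_contra hne
      rcases Nat.lt_or_gt_of_ne hne with h | h
      · have := four_mul_pow_le_pow h; omega
      · have := four_mul_pow_le_pow h; omega
    rw [hij] at hxy hx
    omega
  have := Set.ncard_le_ncard_of_injOn g hmaps hinj ((Set.finite_Icc 1 n).inter_of_right S |>.prod
    (Set.finite_Iio 3))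
  simpa [Set.ncard_prod, Nat.card_coe_set_eq, mul_comm] using this

/-- The set `⋃ i, {4^i, ..., 2·4^i}` is a 4-free set of positive integers with
lower density at least `1/3`; hence `β(4) ≥ 1/3`. -/
theorem beta_four_ge_third :
    (0 ∉ (⋃ i : ℕ, Set.Icc (4 ^ i) (2 * 4 ^ i)) ∧
      FourFree (⋃ i : ℕ, Set.Icc (4 ^ i) (2 * 4 ^ i)) ∧
      1 / 3 ≤ lowerDensity (⋃ i : ℕ, Set.Icc (4 ^ i) (2 * 4 ^ i))) ∧
    1 / 3 ≤ sSup {x : ℝ | ∃ S : Set ℕ, 0 ∉ S ∧ FourFree S ∧ lowerDensity S = x} := by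
  have hpos : 0 ∉ (⋃ i : ℕ, Set.Icc (4 ^ i) (2 * 4 ^ i)) := by simp
  have hdens : 1 / 3 ≤ lowerDensity (⋃ i : ℕ, Set.Icc (4 ^ i) (2 * 4 ^ i)) :=
    le_lowerDensity fun n => by
      rw [one_div_mul_eq_div, div_le_iff₀ three_pos, mul_comm]
      exact_mod_cast le_three_mul_card_powFourBlocks n
  have hbdd : BddAbove {x : ℝ | ∃ S : Set ℕ, 0 ∉ S ∧ FourFree S ∧ lowerDensity S = x} := by
    refine ⟨1, ?_⟩
    rintro _ ⟨S, -, -, rfl⟩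
    exact lowerDensity_le_one S
  exact ⟨⟨hpos, fourFree_powFourBlocks, hdens⟩,
    hdens.trans (le_csSup hbdd ⟨_, hpos, fourFree_powFourBlocks, rfl⟩)⟩
end
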